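/- Let X be a parafinite simplicial set with simplicial Hilbert space H. The projectors Π_{n,i} = S_{n−1,i} S_{n−1,i}† (0 ≤ i ≤ n−1) on H_n commute pairwise, and the orthogonal projector Π_n onto the degenerate subspace ˢH_n = Σ_{i} ran S_{n−1,i} is given by Π_n = 1_n − Π_{i=0}^{n−1}(1_n − Π_{n,i}). -/

import Mathlib

/-!
Since `S_{n,i}† S_{n,i} = 1`, each `Π_{n,i} = S_{n,i} S_{n,i}†` is an orthogonal projection onto
`ran S_{n,i}`. For `i ≤ j` the simplicial identity `s_i s_j = s_{j+1} s_i` is a square of injections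
in which `s_i ρ = s_{j+1} σ` forces `σ ∈ ran s_i`; this Beck–Chevalley property gives the exchange
identity `S_i† S_{j+1} = S_j S_i†`, hence `Π_i Π_{j+1} = T T†` with `T = S_{j+1} S_i`. A product of
two self-adjoint operators is self-adjoint exactly when they commute.
For commuting orthogonal projections `p_i`, `∏ (1 - p_i)` is again one; it kills every `ran p_i`,
while `1 - ∏ (1 - p_i)` maps into `Σ ran p_i`, so `1 - ∏ (1 - p_i)` is the orthogonal projection
onto `Σ ran p_i`.
-/

structure SimplicialSet where
  X : ℕ → Type
  d : (n : ℕ) → ℕ → X (n+1) → X n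
  s : (n : ℕ) → ℕ → X n → X (n+1)
  dd : ∀ (n i j : ℕ), i < j → j ≤ n+2 → ∀ x : X (n+2),
    d n i (d (n+1) j x) = d n (j-1) (d (n+1) i x)
  ds_lt : ∀ (n i j : ℕ), i < j → j ≤ n+1 → ∀ x : X (n+1),
    d (n+1) i (s (n+1) j x) = s n (j-1) (d n i x)
  ds_eq : ∀ (n j : ℕ), j ≤ n → ∀ x : X n, d n j (s n j x) = x
  ds_eq' : ∀ (n j : ℕ), j ≤ n → ∀ x : X n, d n (j+1) (s n j x) = x
  ds_gt : ∀ (n i j : ℕ), j+1 < i → i ≤ n+2 → ∀ x : X (n+1),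
    d (n+1) i (s (n+1) j x) = s n j (d n (i-1) x)
  ss : ∀ (n i j : ℕ), i ≤ j → j ≤ n → ∀ x : X n,
    s (n+1) i (s n j x) = s (n+1) (j+1) (s n i x)

/-- The degeneracy operator `S_{n,i}` on the simplicial Hilbert space, defined on
the simplex basis by `S_{n,i}|σ⟩ = |s_{n,i} σ⟩`. -/
noncomputable def Sop (G : SimplicialSet) [∀ n, Fintype (G.X n)]
    [∀ n, DecidableEq (G.X n)] (n i : ℕ) :
    EuclideanSpace ℂ (G.X n) →ₗ[ℂ] EuclideanSpace ℂ (G.X (n+1)) :=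
  (PiLp.basisFun 2 ℂ (G.X n)).constr ℂ fun σ => EuclideanSpace.single (G.s n i σ) 1

/-- The projector `Π_{n,i} = S_{n-1,i} S_{n-1,i}†` onto the range of the
degeneracy operator `S_{n-1,i}`, as an endomorphism of `H_n` (here `H_{n+1}`). -/
noncomputable def Pio (G : SimplicialSet) [∀ n, Fintype (G.X n)]
    [∀ n, DecidableEq (G.X n)] (n i : ℕ) :
    Module.End ℂ (EuclideanSpace ℂ (G.X (n+1))) :=
  Sop G n i ∘ₗ LinearMap.adjoint (Sop G n i)

/-- The candidate projector `Π_{n+1} = 1 - Π_{i=0}^{n} (1 - Π_{n,i})`. -/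
noncomputable def degProj (G : SimplicialSet) [∀ n, Fintype (G.X n)]
    [∀ n, DecidableEq (G.X n)] (n : ℕ) :
    Module.End ℂ (EuclideanSpace ℂ (G.X (n+1))) :=
  1 - ((List.range (n+1)).map fun i => 1 - Pio G n i).prod

/-- The degenerate simplex subspace `ˢH_{n+1} = Σ_i ran S_{n,i}`. -/
noncomputable def degSpace (G : SimplicialSet) [∀ n, Fintype (G.X n)]
    [∀ n, DecidableEq (G.X n)] (n : ℕ) :
    Submodule ℂ (EuclideanSpace ℂ (G.X (n+1))) :=
  ⨆ i ∈ Finset.range (n+1), LinearMap.range (Sop G n i)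

open LinearMap

section CommutingIdempotents

variable {R : Type*} [Ring R] {ι : Type*}

theorem Commute.list_prod_one_sub_right {x : R} {l : List ι} {p : ι → R}
    (h : ∀ i ∈ l, Commute x (p i)) : Commute x (l.map fun i => 1 - p i).prod := by
  refine Commute.list_prod_right _ _ fun y hy => ?_
  obtain ⟨i, hi, rfl⟩ := List.mem_map.mp hy
  exact (Commute.one_right x).sub_right (h i hi)

theorem list_prod_one_sub_mul_eq_zero {l : List ι} {p : ι → R}
    (hcomm : ∀ i ∈ l, ∀ j ∈ l, Commute (p i) (p j)) {i : ι} (hi : i ∈ l)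
    (hpi : IsIdempotentElem (p i)) : (l.map fun j => 1 - p j).prod * p i = 0 := by
  induction l with
  | nil => simp at hi
  | cons a t ih =>
    rw [List.map_cons, List.prod_cons, mul_assoc]
    rcases List.mem_cons.mp hi with rfl | hit
    · have hQ : Commute (1 - p i) (t.map fun j => 1 - p j).prod :=
        (Commute.one_left _).sub_left
          (Commute.list_prod_one_sub_right fun j hj => hcomm i List.mem_cons_self j (.tail _ hj))
      rw [← mul_assoc, hQ.eq, mul_assoc, hpi.one_sub_mul_self, mul_zero]
    · rw [ih (fun j hj k hk => hcomm j (.tail _ hj) k (.tail _ hk)) hit, mul_zero]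

theorem IsStarProjection.one_sub_list_prod_one_sub [StarRing R] {l : List ι} {p : ι → R}
    (hp : ∀ i ∈ l, IsStarProjection (p i)) (hcomm : ∀ i ∈ l, ∀ j ∈ l, Commute (p i) (p j)) :
    IsStarProjection (1 - (l.map fun i => 1 - p i).prod) := by
  induction l with
  | nil => simp [IsStarProjection.zero]
  | cons a t ih =>
    have ht := ih (fun i hi => hp i (.tail _ hi))
      fun i hi j hj => hcomm i (.tail _ hi) j (.tail _ hj)
    have hat : Commute (p a) (1 - (t.map fun i => 1 - p i).prod) :=
      (Commute.one_right _).sub_right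
        (Commute.list_prod_one_sub_right fun j hj => hcomm a List.mem_cons_self j (.tail _ hj))
    convert IsStarProjection.add_sub_mul_of_commute hat (hp a List.mem_cons_self) ht using 1
    rw [List.map_cons, List.prod_cons]
    noncomm_ring

end CommutingIdempotents

section RangeOfJoin

variable {R M : Type*} [Ring R] [AddCommGroup M] [Module R M] {ι : Type*}

theorem range_one_sub_list_prod_one_sub_le (l : List ι) (p : ι → Module.End R M) :
    range (1 - (l.map fun i => 1 - p i).prod) ≤ ⨆ i ∈ l, range (p i) := by
  induction l with
  | nil => simp
  | cons a t ih =>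
    rintro _ ⟨x, rfl⟩
    set Q := (t.map fun i => 1 - p i).prod
    have hx : (1 - (1 - p a) * Q) x = (1 - Q) x + p a (Q x) := by
      simp only [LinearMap.sub_apply, Module.End.mul_apply, Module.End.one_apply]; abel
    have hle : (⨆ i ∈ t, range (p i)) ≤ ⨆ i ∈ a :: t, range (p i) :=
      biSup_mono fun i hi => List.mem_cons_of_mem a hi
    rw [List.map_cons, List.prod_cons, hx]
    refine add_mem (hle (ih (mem_range_self _ x)))
      (Submodule.mem_iSup_of_mem a (Submodule.mem_iSup_of_mem List.mem_cons_self
        (mem_range_self _ _)))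

theorem range_one_sub_list_prod_one_sub {l : List ι} {p : ι → Module.End R M}
    (hp : ∀ i ∈ l, IsIdempotentElem (p i)) (hcomm : ∀ i ∈ l, ∀ j ∈ l, Commute (p i) (p j)) :
    range (1 - (l.map fun i => 1 - p i).prod) = ⨆ i ∈ l, range (p i) := by
  refine le_antisymm (range_one_sub_list_prod_one_sub_le l p) (iSup₂_le fun i hi => ?_)
  have hfix : (1 - (l.map fun j => 1 - p j).prod) * p i = p i := by
    rw [sub_mul, list_prod_one_sub_mul_eq_zero hcomm hi (hp i hi), one_mul, sub_zero]
  rw [← hfix, Module.End.mul_eq_comp]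
  exact range_comp_le_range _ _

end RangeOfJoin

section IsometryProjection

variable {𝕜 E F : Type*} [RCLike 𝕜] [NormedAddCommGroup E] [InnerProductSpace 𝕜 E]
  [FiniteDimensional 𝕜 E] [NormedAddCommGroup F] [InnerProductSpace 𝕜 F] [FiniteDimensional 𝕜 F]
  {S : E →ₗ[𝕜] F}

theorem isStarProjection_comp_adjoint (hS : adjoint S ∘ₗ S = LinearMap.id) :
    IsStarProjection (S ∘ₗ adjoint S) where
  isIdempotentElem := by
    rw [IsIdempotentElem, Module.End.mul_eq_comp, comp_assoc, ← comp_assoc (adjoint S), hS,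
      id_comp]
  isSelfAdjoint := by
    rw [isSelfAdjoint_iff', adjoint_comp, adjoint_adjoint]

theorem range_comp_adjoint (hS : adjoint S ∘ₗ S = LinearMap.id) :
    range (S ∘ₗ adjoint S) = range S := by
  refine le_antisymm (range_comp_le_range _ _) ?_
  rintro _ ⟨x, rfl⟩
  exact ⟨S x, by rw [comp_apply, ← comp_apply (adjoint S), hS, id_apply]⟩

end IsometryProjection

namespace EuclideanSpace

noncomputable def mapDomain (𝕜 : Type*) [RCLike 𝕜] {α β : Type*} [Fintype α] [DecidableEq β]
    (f : α → β) : EuclideanSpace 𝕜 α →ₗ[𝕜] EuclideanSpace 𝕜 β :=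
  (PiLp.basisFun 2 𝕜 α).constr 𝕜 fun a => single (f a) 1

variable {𝕜 : Type*} [RCLike 𝕜] {α β γ δ : Type*} [Fintype α] [DecidableEq α] [DecidableEq β]

theorem mapDomain_single (f : α → β) (a : α) :
    mapDomain 𝕜 f (single a 1) = single (f a) 1 := by
  have h := (PiLp.basisFun 2 𝕜 α).constr_basis 𝕜 (fun a => single (f a) (1 : 𝕜)) a
  rwa [PiLp.basisFun_apply] at h

theorem ext_single {V : Type*} [AddCommGroup V] [Module 𝕜 V] {A B : EuclideanSpace 𝕜 α →ₗ[𝕜] V}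
    (h : ∀ a, A (single a 1) = B (single a 1)) : A = B :=
  (PiLp.basisFun 2 𝕜 α).ext fun a => by rw [PiLp.basisFun_apply, h]

variable [Fintype β] [DecidableEq γ]

theorem mapDomain_comp (f : α → β) (g : β → γ) :
    mapDomain 𝕜 g ∘ₗ mapDomain 𝕜 f = mapDomain 𝕜 (g ∘ f) :=
  ext_single fun a => by simp only [comp_apply, mapDomain_single, Function.comp_apply]

theorem adjoint_mapDomain_apply (f : α → β) (x : EuclideanSpace 𝕜 β) (a : α) :
    adjoint (mapDomain 𝕜 f) x a = x (f a) := by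
  simpa [inner_single_left, mapDomain_single] using
    adjoint_inner_right (mapDomain 𝕜 f) (single a 1) x

theorem adjoint_mapDomain_single_of_notMem {f : α → β} {b : β} (hb : b ∉ Set.range f) :
    adjoint (mapDomain 𝕜 f) (single b 1) = 0 := by
  ext a
  rw [adjoint_mapDomain_apply, PiLp.single_apply, if_neg fun h => hb ⟨a, h⟩]
  rfl

theorem adjoint_mapDomain_single {f : α → β} (hf : Function.Injective f) (a : α) :
    adjoint (mapDomain 𝕜 f) (single (f a) 1) = single a 1 := by
  ext a'
  simp only [adjoint_mapDomain_apply, PiLp.single_apply, hf.eq_iff]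

theorem adjoint_mapDomain_comp_mapDomain {f : α → β} (hf : Function.Injective f) :
    adjoint (mapDomain 𝕜 f) ∘ₗ mapDomain 𝕜 f = LinearMap.id :=
  ext_single fun a => by rw [comp_apply, mapDomain_single, adjoint_mapDomain_single hf, id_apply]

variable [Fintype γ] [Fintype δ] [DecidableEq δ]

theorem adjoint_mapDomain_comp_mapDomain_of_pullback {f : α → δ} {g : β → δ} {f' : γ → β}
    {g' : γ → α} (hf : Function.Injective f) (hf' : Function.Injective f') (hsq : f ∘ g' = g ∘ f')
    (hpb : ∀ a b, f a = g b → b ∈ Set.range f') :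
    adjoint (mapDomain 𝕜 f) ∘ₗ mapDomain 𝕜 g = mapDomain 𝕜 g' ∘ₗ adjoint (mapDomain 𝕜 f') := by
  refine ext_single fun b => ?_
  simp only [comp_apply, mapDomain_single]
  by_cases hb : b ∈ Set.range f'
  · obtain ⟨c, rfl⟩ := hb
    rw [← Function.comp_apply (f := g), ← hsq, Function.comp_apply, adjoint_mapDomain_single hf,
      adjoint_mapDomain_single hf', mapDomain_single]
  · rw [adjoint_mapDomain_single_of_notMem hb, map_zero,
      adjoint_mapDomain_single_of_notMem fun ⟨a, ha⟩ => hb (hpb a b ha)]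

end EuclideanSpace

namespace SimplicialSet

variable (G : SimplicialSet)

theorem s_injective {n i : ℕ} (hi : i ≤ n) : Function.Injective (G.s n i) :=
  Function.LeftInverse.injective (G.ds_eq n i hi)

theorem mem_range_s_of_s_eq_s {m i j : ℕ} (hij : i ≤ j) (hjm : j ≤ m) {ρ σ : G.X (m+1)}
    (h : G.s (m+1) i ρ = G.s (m+1) (j+1) σ) : σ ∈ Set.range (G.s m i) := by
  refine ⟨G.d m i σ, G.s_injective (n := m+1) (i := j+1) (by omega) ?_⟩
  have hρ : ρ = G.s m j (G.d m i σ) := by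
    rw [← G.ds_eq (m+1) i (by omega) ρ, h, G.ds_lt m i (j+1) (by omega) (by omega) σ,
      Nat.add_sub_cancel]
  rw [← G.ss m i j hij hjm, ← hρ, h]

variable [∀ n, Fintype (G.X n)] [∀ n, DecidableEq (G.X n)]

theorem Sop_eq_mapDomain (n i : ℕ) : Sop G n i = EuclideanSpace.mapDomain ℂ (G.s n i) := rfl

theorem adjoint_Sop_comp_Sop {n i : ℕ} (hi : i ≤ n) :
    adjoint (Sop G n i) ∘ₗ Sop G n i = LinearMap.id :=
  EuclideanSpace.adjoint_mapDomain_comp_mapDomain (G.s_injective hi)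

theorem Sop_comp_Sop {m i j : ℕ} (hij : i ≤ j) (hjm : j ≤ m) :
    Sop G (m+1) i ∘ₗ Sop G m j = Sop G (m+1) (j+1) ∘ₗ Sop G m i := by
  simp only [Sop_eq_mapDomain, EuclideanSpace.mapDomain_comp]
  congr 1
  funext σ
  exact G.ss m i j hij hjm σ

theorem adjoint_Sop_comp_Sop_succ {m i j : ℕ} (hij : i ≤ j) (hjm : j ≤ m) :
    adjoint (Sop G (m+1) i) ∘ₗ Sop G (m+1) (j+1) = Sop G m j ∘ₗ adjoint (Sop G m i) :=
  EuclideanSpace.adjoint_mapDomain_comp_mapDomain_of_pullback (G.s_injective (by omega))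
    (G.s_injective (by omega)) (funext (G.ss m i j hij hjm))
    fun _ _ h => G.mem_range_s_of_s_eq_s hij hjm h

theorem isStarProjection_Pio {n i : ℕ} (hi : i ≤ n) : IsStarProjection (Pio G n i) :=
  isStarProjection_comp_adjoint (G.adjoint_Sop_comp_Sop hi)

theorem range_Pio {n i : ℕ} (hi : i ≤ n) : range (Pio G n i) = range (Sop G n i) :=
  range_comp_adjoint (G.adjoint_Sop_comp_Sop hi)

theorem Pio_mul_Pio {m i j : ℕ} (hij : i ≤ j) (hjm : j ≤ m) :
    Pio G (m+1) i * Pio G (m+1) (j+1) =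
      (Sop G (m+1) (j+1) ∘ₗ Sop G m i) ∘ₗ adjoint (Sop G (m+1) (j+1) ∘ₗ Sop G m i) := by
  calc Pio G (m+1) i * Pio G (m+1) (j+1)
      = Sop G (m+1) i ∘ₗ (adjoint (Sop G (m+1) i) ∘ₗ Sop G (m+1) (j+1)) ∘ₗ
          adjoint (Sop G (m+1) (j+1)) := by
        simp only [Pio, Module.End.mul_eq_comp, comp_assoc]
    _ = (Sop G (m+1) i ∘ₗ Sop G m j) ∘ₗ adjoint (Sop G m i) ∘ₗ adjoint (Sop G (m+1) (j+1)) := by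
        rw [G.adjoint_Sop_comp_Sop_succ hij hjm]; simp only [comp_assoc]
    _ = _ := by rw [G.Sop_comp_Sop hij hjm, adjoint_comp]

theorem commute_Pio_of_lt {n i j : ℕ} (hij : i < j) (hjn : j ≤ n) :
    Commute (Pio G n i) (Pio G n j) := by
  obtain ⟨m, rfl⟩ : ∃ m, n = m + 1 := ⟨n - 1, by omega⟩
  obtain ⟨j, rfl⟩ : ∃ j', j = j' + 1 := ⟨j - 1, by omega⟩
  rw [IsSelfAdjoint.commute_iff (G.isStarProjection_Pio (by omega)).isSelfAdjoint
    (G.isStarProjection_Pio hjn).isSelfAdjoint, G.Pio_mul_Pio (by omega) (by omega)]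
  exact (isSymmetric_iff_isSelfAdjoint _).mp (isSymmetric_self_comp_adjoint _)

theorem commute_Pio {n i j : ℕ} (hi : i ≤ n) (hj : j ≤ n) : Commute (Pio G n i) (Pio G n j) := by
  rcases lt_trichotomy i j with hij | rfl | hji
  · exact G.commute_Pio_of_lt hij hj
  · exact Commute.refl _
  · exact (G.commute_Pio_of_lt hji hi).symm

theorem isStarProjection_degProj (n : ℕ) : IsStarProjection (degProj G n) := by
  have hle : ∀ i ∈ List.range (n+1), i ≤ n := fun _ hi => Nat.lt_succ_iff.mp (List.mem_range.mp hi)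
  exact IsStarProjection.one_sub_list_prod_one_sub (fun i hi => G.isStarProjection_Pio (hle i hi))
    fun i hi j hj => G.commute_Pio (hle i hi) (hle j hj)

theorem range_degProj (n : ℕ) : range (degProj G n) = degSpace G n := by
  have hle : ∀ i ∈ List.range (n+1), i ≤ n := fun _ hi => Nat.lt_succ_iff.mp (List.mem_range.mp hi)
  rw [degProj, range_one_sub_list_prod_one_sub
    (fun i hi => (G.isStarProjection_Pio (hle i hi)).isIdempotentElem)
    fun i hi j hj => G.commute_Pio (hle i hi) (hle j hj)]
  exact iSup_congr fun i => iSup_congr_Prop (by simp) fun hi =>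
    G.range_Pio (hle i (by simpa using hi))

end SimplicialSet

/-- The projectors `Π_{n,i}` commute pairwise, and
`Π_{n+1} = 1 - Π_i (1 - Π_{n,i})` is the orthogonal projector onto the degenerate
subspace `ˢH_{n+1}`: it maps into `ˢH_{n+1}`, fixes `ˢH_{n+1}` pointwise, and
`x - Π_{n+1} x` is orthogonal to `ˢH_{n+1}` for all `x`. -/
theorem degenerate_projector (G : SimplicialSet) [∀ n, Fintype (G.X n)]
    [∀ n, DecidableEq (G.X n)] (n : ℕ) :
    (∀ i j : ℕ, i ≤ n → j ≤ n → Pio G n i * Pio G n j = Pio G n j * Pio G n i) ∧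
    (∀ x, degProj G n x ∈ degSpace G n) ∧
    (∀ x ∈ degSpace G n, degProj G n x = x) ∧
    (∀ x, x - degProj G n x ∈ (degSpace G n)ᗮ) := by
  have hproj := isStarProjection_iff_isSymmetricProjection.mp (G.isStarProjection_degProj n)
  rw [← G.range_degProj n]
  refine ⟨fun i j hi hj => (G.commute_Pio hi hj).eq, fun x => mem_range_self _ x,
    fun x hx => hproj.isIdempotentElem.mem_range_iff.mp hx, fun x => ?_⟩
  rw [hproj.isSymmetric.orthogonal_range, mem_ker, map_sub, ← Module.End.mul_apply,
    hproj.isIdempotentElem.eq, sub_self]
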